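/- arXiv:1604.00258 — 3 statements merged into one kernel-verified Lean document; each statement's English description precedes it below -/
import Mathlib

section
/- Let S : ℕ × {0,1} → O(X) be a dyadic subbase of a T0 topological space X (the image of S is a subbasis of the topology and S(n,0) ∩ S(n,1) = ∅ for all n). Then the induced map φ_S : X → T^ω, defined by φ_S(x)(n) = 0 if x ∈ S(n,0), 1 if x ∈ S(n,1), and ⊥ otherwise, is injective and continuous. -/
/-! In a T0 space whose topology is generated by a family `g`, a point is determined by the
members of `g` containing it. Since `S n false` and `S n true` are disjoint, `φ_S x n = some i`
holds exactly when `x ∈ S n i`, so `φ_S` records that information; the same equivalence shows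
that the preimages of the subbasic opens `{some i}` of `T^ω` are the open sets `S n i`. -/

/-- Plotkin's T, modelled as `Option Bool` (`⊥ = none`), topology generated by `{{0},{1}}`. -/
def plotkinT : TopologicalSpace (Option Bool) :=
  TopologicalSpace.generateFrom {{some false}, {some true}}

/-- `T^ω`: the countable product of Plotkin's T. -/
def Tomega : TopologicalSpace (ℕ → Option Bool) :=
  @Pi.topologicalSpace ℕ (fun _ => Option Bool) (fun _ => plotkinT)

/-- The map `φ_S : X → T^ω` induced by `S : ℕ × {0,1} → O(X)`:
`φ_S(x)(n) = 0` if `x ∈ S n 0`, `1` if `x ∈ S n 1`, `⊥` otherwise. -/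
noncomputable def phi {X : Type*} (S : ℕ → Bool → Set X) (x : X) (n : ℕ) : Option Bool :=
  open Classical in
  if x ∈ S n false then some false else if x ∈ S n true then some true else none

open TopologicalSpace

theorem inseparable_of_forall_mem_iff_of_eq_generateFrom {X : Type*} [t : TopologicalSpace X]
    {g : Set (Set X)} (ht : t = generateFrom g) {x y : X} (h : ∀ s ∈ g, x ∈ s ↔ y ∈ s) :
    Inseparable x y := by
  unfold Inseparable
  subst ht
  have hsets : {s | x ∈ s ∧ s ∈ g} = {s | y ∈ s ∧ s ∈ g} :=
    Set.ext fun s => ⟨fun ⟨hx, hs⟩ => ⟨(h s hs).1 hx, hs⟩, fun ⟨hy, hs⟩ => ⟨(h s hs).2 hy, hs⟩⟩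
  rw [nhds_generateFrom, nhds_generateFrom, hsets]

section phi

variable {X : Type*} (S : ℕ → Bool → Set X) {n : ℕ}

theorem phi_apply_eq_some_iff (hdisj : S n false ∩ S n true = ∅) (x : X) (i : Bool) :
    phi S x n = some i ↔ x ∈ S n i := by
  have hx : x ∈ S n false → x ∉ S n true :=
    fun hx0 => Set.disjoint_left.mp (Set.disjoint_iff_inter_eq_empty.mpr hdisj) hx0
  unfold phi
  cases i <;> split_ifs <;> simp_all

theorem preimage_phi_apply_singleton_some (hdisj : S n false ∩ S n true = ∅) (i : Bool) :
    (fun x => phi S x n) ⁻¹' {some i} = S n i :=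
  Set.ext fun x => phi_apply_eq_some_iff S hdisj x i

theorem continuous_phi_apply [TopologicalSpace X] (hopen : ∀ i, IsOpen (S n i))
    (hdisj : S n false ∩ S n true = ∅) :
    @Continuous X (Option Bool) _ plotkinT (fun x => phi S x n) := by
  rw [plotkinT, continuous_generateFrom_iff]
  rintro s (rfl | rfl) <;> rw [preimage_phi_apply_singleton_some S hdisj] <;> exact hopen _

end phi

/-- If `S` is a dyadic subbase of a T0 space `X` (its image is a subbasis of
the topology and `S n 0 ∩ S n 1 = ∅` for all `n`), then `φ_S : X → T^ω` is injective
and continuous. -/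
theorem phi_injective_continuous {X : Type*} [tX : TopologicalSpace X] [T0Space X]
    (S : ℕ → Bool → Set X)
    (hsub : tX = TopologicalSpace.generateFrom {U : Set X | ∃ n i, U = S n i})
    (hdisj : ∀ n : ℕ, S n false ∩ S n true = ∅) :
    Function.Injective (phi S) ∧ @Continuous X (ℕ → Option Bool) tX Tomega (phi S) := by
  refine ⟨fun x y hxy => ?_, ?_⟩
  · refine (inseparable_of_forall_mem_iff_of_eq_generateFrom hsub ?_).eq
    rintro _ ⟨n, i, rfl⟩
    rw [← phi_apply_eq_some_iff S (hdisj n), ← phi_apply_eq_some_iff S (hdisj n), hxy]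
  · have hopen : ∀ n i, IsOpen (S n i) := fun n i => hsub ▸ isOpen_generateFrom_of_mem ⟨n, i, rfl⟩
    exact @continuous_pi _ _ _ tX (fun _ => plotkinT) _
      fun n => continuous_phi_apply S (hopen n) (hdisj n)
end

section
/- Let S be a dyadic subbase of X and φ_S : X → T^ω the induced map. Then φ_S is a topological embedding (a homeomorphism onto its image). -/
/-!
The topology induced by `φ_S` from `T^ω` is generated by the preimages of the subbasic sets
`{0}, {1}` under the coordinates `x ↦ φ_S(x)(n)`, and, because `S n false` and `S n true` are
disjoint, these preimages are exactly the sets `S n i`. So `φ_S` induces the topology of `X`, and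
an inducing map out of a T0 space is injective.
-/

open TopologicalSpace Topology

theorem induced_pi_generateFrom {X ι : Type*} {Y : ι → Type*} (B : ∀ i, Set (Set (Y i)))
    (f : X → ∀ i, Y i) :
    induced f (@Pi.topologicalSpace ι Y fun i => generateFrom (B i)) =
      generateFrom (⋃ i, Set.preimage (fun x => f x i) '' B i) := by
  change induced f (⨅ i, induced (fun g => g i) (generateFrom (B i))) = _
  rw [generateFrom_iUnion, induced_iInf]
  refine iInf_congr fun i => ?_
  rw [induced_compose, induced_generateFrom_eq]
  rfl

section Dyadic

variable {X : Type*} (S : ℕ → Bool → Set X)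

theorem phi_eq_some_iff (hdisj : ∀ n : ℕ, S n false ∩ S n true = ∅) (x : X) (n : ℕ) (b : Bool) :
    phi S x n = some b ↔ x ∈ S n b := by
  have hnot : x ∈ S n false → x ∉ S n true := fun h0 h1 =>
    (Set.eq_empty_iff_forall_notMem.mp (hdisj n) x) ⟨h0, h1⟩
  cases b <;> unfold phi <;> split_ifs <;> simp_all

theorem preimage_phi_apply_singleton (hdisj : ∀ n : ℕ, S n false ∩ S n true = ∅) (n : ℕ)
    (b : Bool) : (fun x => phi S x n) ⁻¹' {some b} = S n b :=
  Set.ext fun x => phi_eq_some_iff S hdisj x n b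

theorem induced_phi_Tomega (hdisj : ∀ n : ℕ, S n false ∩ S n true = ∅) :
    induced (phi S) Tomega = generateFrom {U : Set X | ∃ n i, U = S n i} := by
  rw [Tomega, plotkinT, induced_pi_generateFrom]
  congr 1
  ext U
  simp only [Set.image_insert_eq, Set.image_singleton, preimage_phi_apply_singleton S hdisj,
    Set.mem_iUnion, Set.mem_insert_iff, Set.mem_singleton_iff, Set.mem_ofPred_eq, Bool.exists_bool]

end Dyadic

/-- If `S` is a dyadic subbase of `X` (so that `X` is T0), the induced map
`φ_S : X → T^ω` is a topological embedding. -/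
theorem phi_embedding {X : Type*} [tX : TopologicalSpace X] [T0Space X]
    (S : ℕ → Bool → Set X)
    (hsub : tX = TopologicalSpace.generateFrom {U : Set X | ∃ n i, U = S n i})
    (hdisj : ∀ n : ℕ, S n false ∩ S n true = ∅) :
    @Topology.IsEmbedding X (ℕ → Option Bool) tX Tomega (phi S) := by
  let _ : TopologicalSpace (ℕ → Option Bool) := Tomega
  have hinducing : IsInducing (phi S) := ⟨hsub.trans (induced_phi_Tomega S hdisj).symm⟩
  exact hinducing.isEmbedding
end

section
/- Let T be a pruned binary tree named by p ∈ T^ω under δ_PT as follows: p(0) = ⊥ iff T ≠ ∅, and for each w ∈ T with code n, p(n+1) = ⊥ iff both children w0, w1 ∈ T, p(n+1) = 0 iff only w0 ∈ T, p(n+1) = 1 iff only w1 ∈ T (and p(m) ∈ {0,1} arbitrary for codes of vertices not in T). If [T] is finite with cardinality k, then the number of positions n with p(n) = ⊥ equals k. -/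
/-- The set of infinite paths through a set of finite binary strings. -/
def Paths (T : Set (List Bool)) : Set (ℕ → Bool) :=
  {p | ∀ n : ℕ, (List.ofFn fun i : Fin n => p i) ∈ T}

/-!
The positions of `⊥` in `p` are `0` (if `T ≠ ∅`) and `n + 1` for the branching vertices `ν n`.
Send `0` to the leftmost path of `T` and `n + 1` to the leftmost path through the right child
of `ν n`. Call `i` a right turn of a path `x` if `x` goes right at `i` although the left child
of its `i`-th vertex is in `T`. A path without right turns from `m` on is the leftmost path
through its first `m` bits, so every path is the image of its last right turn, or of `0` if it
has none. The last right turn exists when `[T]` is finite, because distinct right turns of `x`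
give distinct paths: the leftmost ones through the left children.
-/

namespace BinaryTree

open Set

noncomputable section

def initSeg (x : ℕ → Bool) (n : ℕ) : List Bool :=
  List.ofFn fun i : Fin n => x i

section InitSeg

variable {x y : ℕ → Bool} {m n i : ℕ}

@[simp]
lemma length_initSeg : (initSeg x n).length = n :=
  List.length_ofFn

@[simp]
lemma getElem_initSeg (h : i < (initSeg x n).length) : (initSeg x n)[i] = x i :=
  List.getElem_ofFn h

lemma initSeg_succ : initSeg x (n + 1) = initSeg x n ++ [x n] := by
  rw [initSeg, List.ofFn_succ_last]
  rfl

lemma initSeg_prefix (h : m ≤ n) : initSeg x m <+: initSeg x n := by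
  induction n, h using Nat.le_induction with
  | base => exact List.prefix_rfl
  | succ n _ ih => exact ih.trans (initSeg_succ ▸ List.prefix_append _ _)

lemma initSeg_eq_initSeg_iff : initSeg x n = initSeg y n ↔ ∀ i < n, x i = y i := by
  simp [initSeg, List.ofFn_inj, funext_iff, Fin.forall_iff]

end InitSeg

variable {T : Set (List Bool)} {v w : List Bool} {x y : ℕ → Bool}

open Classical in
def leftBit (T : Set (List Bool)) (w : List Bool) : Bool :=
  decide (w ++ [false] ∉ T)

def extendLeft (T : Set (List Bool)) (w : List Bool) : List Bool :=
  w ++ [leftBit T w]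

/-- The path that follows `v` and then always turns left when it can. -/
def leftmost (T : Set (List Bool)) (v : List Bool) (i : ℕ) : Bool :=
  if h : i < v.length then v[i] else leftBit T ((extendLeft T)^[i - v.length] v)

lemma leftmost_of_lt {i : ℕ} (h : i < v.length) : leftmost T v i = v[i] :=
  dif_pos h

lemma initSeg_leftmost_add (v : List Bool) (n : ℕ) :
    initSeg (leftmost T v) (v.length + n) = (extendLeft T)^[n] v := by
  induction n with
  | zero =>
    refine List.ext_getElem (by simp) fun i h _ => ?_
    rw [getElem_initSeg, leftmost_of_lt]
    rfl
  | succ n ih =>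
    rw [← add_assoc, initSeg_succ, ih, Function.iterate_succ_apply']
    simp [leftmost, extendLeft]

lemma initSeg_leftmost_append (v w : List Bool) :
    initSeg (leftmost T (v ++ w)) v.length = v :=
  List.ext_getElem (by simp) fun i h _ => by
    rw [getElem_initSeg, leftmost_of_lt (by simp; omega), List.getElem_append_left]

lemma leftmost_eq_leftBit {i : ℕ} (h : v.length ≤ i) :
    leftmost T v i = leftBit T (initSeg (leftmost T v) i) := by
  obtain ⟨n, rfl⟩ := Nat.exists_eq_add_of_le h
  rw [initSeg_leftmost_add]
  simp [leftmost]

lemma leftmost_mem_paths (htree : ∀ w v : List Bool, w <+: v → v ∈ T → w ∈ T)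
    (hpruned : ∀ w ∈ T, w ++ [false] ∈ T ∨ w ++ [true] ∈ T) (hv : v ∈ T) :
    leftmost T v ∈ Paths T := by
  have hext : MapsTo (extendLeft T) T T := fun w hw => by
    by_cases hl : w ++ [false] ∈ T
    · simp [extendLeft, leftBit, hl]
    · simpa [extendLeft, leftBit, hl] using hpruned w hw
  intro n
  refine htree _ _ (initSeg_prefix (Nat.le_add_left n v.length)) ?_
  rw [initSeg_leftmost_add]
  exact hext.iterate n hv

def rightTurns (T : Set (List Bool)) (x : ℕ → Bool) : Set ℕ :=
  {i | x i = true ∧ initSeg x i ++ [false] ∈ T}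

lemma eq_leftBit_of_not_mem_rightTurns (hx : x ∈ Paths T) {i : ℕ}
    (hi : i ∉ rightTurns T x) : x i = leftBit T (initSeg x i) := by
  cases hxi : x i with
  | false =>
    have h : initSeg x (i + 1) ∈ T := hx (i + 1)
    rw [initSeg_succ, hxi] at h
    simp [leftBit, h]
  | true => simp_all [rightTurns, leftBit]

lemma rightTurns_leftmost_subset : rightTurns T (leftmost T v) ⊆ Iio v.length := by
  rintro i ⟨hright, hleft⟩
  by_contra hi
  rw [leftmost_eq_leftBit (not_lt.1 hi)] at hright
  simp [leftBit, hleft] at hright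

lemma length_mem_rightTurns_leftmost (hw : w ++ [false] ∈ T) :
    w.length ∈ rightTurns T (leftmost T (w ++ [true])) := by
  refine ⟨by simp [leftmost_of_lt], ?_⟩
  rwa [initSeg_leftmost_append]

lemma eq_of_initSeg_eq_of_rightTurns_subset (hx : x ∈ Paths T) (hy : y ∈ Paths T) {m : ℕ}
    (hxy : initSeg x m = initSeg y m) (hxm : rightTurns T x ⊆ Iio m)
    (hym : rightTurns T y ⊆ Iio m) : x = y := by
  have hseg : ∀ n, m ≤ n → initSeg x n = initSeg y n := by
    intro n hn
    induction n, hn using Nat.le_induction with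
    | base => exact hxy
    | succ n hn ih =>
      have hnx : n ∉ rightTurns T x := fun h => (hxm h).not_ge hn
      have hny : n ∉ rightTurns T y := fun h => (hym h).not_ge hn
      rw [initSeg_succ, initSeg_succ, eq_leftBit_of_not_mem_rightTurns hx hnx,
        eq_leftBit_of_not_mem_rightTurns hy hny, ih]
  funext i
  exact initSeg_eq_initSeg_iff.1 (hseg (m + i + 1) (by omega)) i (by omega)

lemma eq_leftmost (htree : ∀ w v : List Bool, w <+: v → v ∈ T → w ∈ T)
    (hpruned : ∀ w ∈ T, w ++ [false] ∈ T ∨ w ++ [true] ∈ T) (hx : x ∈ Paths T)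
    (hv : v ∈ T) (hxv : initSeg x v.length = v) (hturns : rightTurns T x ⊆ Iio v.length) :
    x = leftmost T v := by
  refine eq_of_initSeg_eq_of_rightTurns_subset hx (leftmost_mem_paths htree hpruned hv) ?_
    hturns rightTurns_leftmost_subset
  simpa [hxv] using (initSeg_leftmost_append (T := T) v []).symm

lemma leftmost_nil_ne_leftmost_append_true (hw : w ++ [false] ∈ T) :
    leftmost T [] ≠ leftmost T (w ++ [true]) := fun h => by
  have hturn : w.length ∈ rightTurns T (leftmost T []) := h ▸ length_mem_rightTurns_leftmost hw
  simpa using rightTurns_leftmost_subset hturn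

lemma eq_of_leftmost_append_true_eq {u : List Bool} (hu : u ++ [false] ∈ T)
    (hw : w ++ [false] ∈ T) (h : leftmost T (u ++ [true]) = leftmost T (w ++ [true])) :
    u = w := by
  have hu' : u.length ∈ rightTurns T (leftmost T (w ++ [true])) :=
    h ▸ length_mem_rightTurns_leftmost hu
  have hw' : w.length ∈ rightTurns T (leftmost T (u ++ [true])) :=
    h ▸ length_mem_rightTurns_leftmost hw
  have huw : u.length < w.length + 1 := by simpa using rightTurns_leftmost_subset hu'
  have hwu : w.length < u.length + 1 := by simpa using rightTurns_leftmost_subset hw'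
  calc u = initSeg (leftmost T (u ++ [true])) u.length := (initSeg_leftmost_append u _).symm
    _ = initSeg (leftmost T (w ++ [true])) w.length := by rw [h, show u.length = w.length by omega]
    _ = w := initSeg_leftmost_append w _

lemma rightTurns_finite (htree : ∀ w v : List Bool, w <+: v → v ∈ T → w ∈ T)
    (hpruned : ∀ w ∈ T, w ++ [false] ∈ T ∨ w ++ [true] ∈ T) (hfin : (Paths T).Finite)
    (x : ℕ → Bool) : (rightTurns T x).Finite := by
  set turnLeft : ℕ → ℕ → Bool := fun i => leftmost T (initSeg x i ++ [false])
  have hne : ∀ i j, i ∈ rightTurns T x → i < j → turnLeft i ≠ turnLeft j := by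
    intro i j hi hij h
    have hleft : turnLeft i i = false := by simp [turnLeft, leftmost_of_lt]
    have hright : turnLeft j i = true := by
      change leftmost T (initSeg x j ++ [false]) i = true
      rw [leftmost_of_lt (by simp; omega), List.getElem_append_left (by simpa)]
      simpa using hi.1
    simp [h, hright] at hleft
  refine Finite.of_finite_image (f := turnLeft) (hfin.subset ?_) fun i hi j hj h => ?_
  · rintro _ ⟨i, hi, rfl⟩
    exact leftmost_mem_paths htree hpruned hi.2
  · by_contra hij
    rcases Nat.lt_or_gt_of_ne hij with hij | hij
    exacts [hne i j hi hij h, hne j i hj hij h.symm]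

def branchPath (T : Set (List Bool)) (ν : ℕ → List Bool) : ℕ → ℕ → Bool
  | 0 => leftmost T []
  | n + 1 => leftmost T (ν n ++ [true])

theorem bijOn_branchPath {ν : ℕ → List Bool} (hν : Function.Bijective ν)
    (htree : ∀ w v : List Bool, w <+: v → v ∈ T → w ∈ T)
    (hpruned : ∀ w ∈ T, w ++ [false] ∈ T ∨ w ++ [true] ∈ T) (hfin : (Paths T).Finite)
    {S : Set ℕ} (hS0 : 0 ∈ S ↔ [] ∈ T)
    (hS : ∀ n, n + 1 ∈ S ↔ ν n ++ [false] ∈ T ∧ ν n ++ [true] ∈ T) :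
    BijOn (branchPath T ν) S (Paths T) := by
  refine ⟨?_, ?_, ?_⟩
  · rintro (_ | n) hn
    exacts [leftmost_mem_paths htree hpruned (hS0.1 hn),
      leftmost_mem_paths htree hpruned ((hS n).1 hn).2]
  · rintro (_ | a) ha (_ | b) hb h
    · rfl
    · exact absurd h (leftmost_nil_ne_leftmost_append_true ((hS b).1 hb).1)
    · exact absurd h.symm (leftmost_nil_ne_leftmost_append_true ((hS a).1 ha).1)
    · rw [hν.injective (eq_of_leftmost_append_true_eq ((hS a).1 ha).1 ((hS b).1 hb).1 h)]
  · intro x hx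
    rcases (rightTurns T x).eq_empty_or_nonempty with hnone | hsome
    · refine ⟨0, hS0.2 (hx 0), (eq_leftmost htree hpruned hx (hx 0) rfl ?_).symm⟩
      simp [hnone]
    obtain ⟨i, ⟨hright, hleft⟩, hlast⟩ :=
      exists_max_image _ id (rightTurns_finite htree hpruned hfin x) hsome
    obtain ⟨n, hn⟩ := hν.surjective (initSeg x i)
    have hstep : initSeg x i ++ [true] = initSeg x (i + 1) := by rw [initSeg_succ, hright]
    have hnT : ν n ++ [true] ∈ T := by rw [hn, hstep]; exact hx (i + 1)
    refine ⟨n + 1, (hS n).2 ⟨hn ▸ hleft, hnT⟩, ?_⟩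
    refine (eq_leftmost htree hpruned hx hnT ?_ fun j hj => ?_).symm
    · simp [hn, hstep]
    · simpa [hn, Nat.lt_succ_iff] using hlast j hj

end

end BinaryTree

open BinaryTree

theorem card_bot_eq_card_paths_general (ν : ℕ → List Bool) (hν : Function.Bijective ν)
    (T : Set (List Bool))
    (htree : ∀ w v : List Bool, w <+: v → v ∈ T → w ∈ T)
    (hpruned : ∀ w ∈ T, w ++ [false] ∈ T ∨ w ++ [true] ∈ T)
    (p : ℕ → Option Bool)
    (h0 : p 0 = none ↔ T.Nonempty)
    (hbot : ∀ n : ℕ, ν n ∈ T →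
      (p (n + 1) = none ↔ (ν n ++ [false] ∈ T ∧ ν n ++ [true] ∈ T)))
    (hout : ∀ n : ℕ, ν n ∉ T → p (n + 1) ≠ none)
    (k : ℕ) (hfin : (Paths T).Finite) (hk : (Paths T).ncard = k) :
    {n : ℕ | p n = none}.Finite ∧ {n : ℕ | p n = none}.ncard = k := by
  have hnil : T.Nonempty ↔ [] ∈ T :=
    ⟨fun ⟨w, hw⟩ => htree _ _ List.nil_prefix hw, fun h => ⟨_, h⟩⟩
  have hsucc : ∀ n, p (n + 1) = none ↔ ν n ++ [false] ∈ T ∧ ν n ++ [true] ∈ T := by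
    intro n
    by_cases hn : ν n ∈ T
    · exact hbot n hn
    · exact iff_of_false (hout n hn) fun h => hn (htree _ _ (List.prefix_append _ _) h.1)
  have hbij := bijOn_branchPath (S := {n | p n = none}) hν htree hpruned hfin
    (h0.trans hnil) hsucc
  exact ⟨hbij.finite_iff_finite.2 hfin, hbij.ncard_eq.trans hk⟩

/-- Let `T` be a pruned binary tree and `p ∈ T^ω` its canonical `δ_PT`-name
(with `ν : ℕ → {0,1}*` a bijection): `p 0 = ⊥ ↔ T ≠ ∅`; for `w = ν n ∈ T`,
`p (n+1) = ⊥` iff both children of `w` are in `T`, `p (n+1) = 0` iff only `w0 ∈ T`,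
`p (n+1) = 1` iff only `w1 ∈ T`; and `p (m+1) ∈ {0,1}` for codes `m` of vertices not
in `T`. If `[T]` is finite of cardinality `k`, then `p` has exactly `k` positions
equal to `⊥`. -/
theorem card_bot_eq_card_paths (ν : ℕ → List Bool) (hν : Function.Bijective ν)
    (T : Set (List Bool))
    (htree : ∀ w v : List Bool, w <+: v → v ∈ T → w ∈ T)
    (hpruned : ∀ w ∈ T, w ++ [false] ∈ T ∨ w ++ [true] ∈ T)
    (p : ℕ → Option Bool)
    (h0 : p 0 = none ↔ T.Nonempty)
    (hbot : ∀ n : ℕ, ν n ∈ T →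
      (p (n + 1) = none ↔ (ν n ++ [false] ∈ T ∧ ν n ++ [true] ∈ T)))
    (hzero : ∀ n : ℕ, ν n ∈ T →
      (p (n + 1) = some false ↔ (ν n ++ [false] ∈ T ∧ ν n ++ [true] ∉ T)))
    (hone : ∀ n : ℕ, ν n ∈ T →
      (p (n + 1) = some true ↔ (ν n ++ [true] ∈ T ∧ ν n ++ [false] ∉ T)))
    (hout : ∀ n : ℕ, ν n ∉ T → p (n + 1) ≠ none)
    (k : ℕ) (hfin : (Paths T).Finite) (hk : (Paths T).ncard = k) :
    {n : ℕ | p n = none}.Finite ∧ {n : ℕ | p n = none}.ncard = k :=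
  card_bot_eq_card_paths_general ν hν T htree hpruned p h0 hbot hout k hfin hk
end
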